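/- Let f ∈ C¹(M), let F be a finite family of pairwise disjoint nondegenerate closed subintervals of [-M,M] on each of which f is affine and nonconstant, and suppose f is nice to F (i.e., for each J ∈ F, either N(f,J) ∉ [-M,M] or N(f,J) lies in the interior of some I ∈ F). Then for every J ∈ F and x ∈ J, either Newton's method diverges for (f,x) (some iterate leaves [-M,M]), or the Newton sequence τ(f,x) is well-defined and eventually periodic. -/
import Mathlib

open Set

/-- Newton map: N(f,x) = x - f(x)/f'(x). -/
noncomputable def newton (f f' : ℝ → ℝ) (x : ℝ) : ℝ := x - f x / f' x

/-- Newton sequence: x₀ = x, x_{n+1} = N(f, x_n). -/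
noncomputable def newtonSeq (f f' : ℝ → ℝ) (x : ℝ) : ℕ → ℝ
  | 0 => x
  | n + 1 => newton f f' (newtonSeq f f' x n)

/-- If f ∈ C¹(M) is nice to a finite disjoint family F ⊆ Aff(f) (intervals encoded by
their endpoint pairs, with v p = N(f, [p.1, p.2])), then for every interval of the
family and every point x in it, either Newton's method diverges for (f,x), or the
Newton sequence τ(f,x) is well-defined and eventually periodic. -/
theorem stmt6 (M : ℝ) (hM : 0 < M) (f f' : ℝ → ℝ)
    (hf : ∀ t ∈ Icc (-M) M, HasDerivWithinAt f (f' t) (Icc (-M) M) t)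
    (hf' : ContinuousOn f' (Icc (-M) M))
    (F : Finset (ℝ × ℝ))
    (hF : ∀ p ∈ F, p.1 < p.2 ∧ Icc p.1 p.2 ⊆ Icc (-M) M)
    (hdisj : ∀ p ∈ F, ∀ q ∈ F, p ≠ q → Disjoint (Icc p.1 p.2) (Icc q.1 q.2))
    (haff : ∀ p ∈ F, ∃ a b : ℝ, a ≠ 0 ∧ ∀ t ∈ Icc p.1 p.2, f t = a * t + b ∧ f' t = a)
    (v : ℝ × ℝ → ℝ)
    (hv : ∀ p ∈ F, ∀ x ∈ Icc p.1 p.2, f' x ≠ 0 ∧ newton f f' x = v p)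
    (hnice : ∀ p ∈ F, v p ∉ Icc (-M) M ∨ ∃ q ∈ F, v p ∈ Ioo q.1 q.2) :
    ∀ p ∈ F, ∀ x ∈ Icc p.1 p.2,
      -- Newton's method diverges for (f,x):
      (∃ n : ℕ, (∀ k ≤ n, newtonSeq f f' x k ∈ Icc (-M) M ∧
          f' (newtonSeq f f' x k) ≠ 0) ∧ M < |newtonSeq f f' x (n + 1)|) ∨
      -- or τ(f,x) is well-defined and eventually periodic:
      ((∀ n : ℕ, newtonSeq f f' x n ∈ Icc (-M) M ∧ f' (newtonSeq f f' x n) ≠ 0) ∧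
        ∃ p₀ : ℕ, 1 ≤ p₀ ∧ ∃ N : ℕ, ∀ n ≥ N,
          newtonSeq f f' x (n + p₀) = newtonSeq f f' x n) := by
  classical
  intro p hp x hx
  set y : ℕ → ℝ := newtonSeq f f' x with hydef
  -- transition map on intervals
  set g : ℝ × ℝ → ℝ × ℝ := fun q =>
    if h : ∃ r ∈ F, v q ∈ Ioo r.1 r.2 then h.choose else q with hgdef
  set Q : ℕ → ℝ × ℝ := fun n => g^[n] p with hQdef
  have hQ0 : Q 0 = p := rfl
  have hQsucc : ∀ n, Q (n + 1) = g (Q n) := by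
    intro n
    simp only [hQdef, Function.iterate_succ_apply']
  have hstep : ∀ q ∈ F, v q ∈ Icc (-M) M → g q ∈ F ∧ v q ∈ Ioo (g q).1 (g q).2 := by
    intro q hq hvq
    rcases hnice q hq with h | h
    · exact absurd hvq h
    · have hgq : g q = h.choose := by
        simp only [hgdef]
        rw [dif_pos h]
      rw [hgq]
      exact ⟨h.choose_spec.1, h.choose_spec.2⟩
  -- Good n : the invariant up to time n
  have hGood : ∀ n, (∀ k < n, v (Q k) ∈ Icc (-M) M) →
      Q n ∈ F ∧ y n ∈ Icc (Q n).1 (Q n).2 := by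
    intro n
    induction n with
    | zero => intro _; exact ⟨hQ0 ▸ hp, hQ0 ▸ hx⟩
    | succ n ih =>
      intro h
      have hprev := ih (fun k hk => h k (Nat.lt_succ_of_lt hk))
      have hvn : v (Q n) ∈ Icc (-M) M := h n (Nat.lt_succ_self n)
      obtain ⟨hgF, hIoo⟩ := hstep _ hprev.1 hvn
      have hy1 : y (n + 1) = v (Q n) := by
        have := (hv _ hprev.1 _ hprev.2).2
        simpa [hydef, newtonSeq] using this
      rw [hQsucc]
      refine ⟨hgF, ?_⟩
      rw [hy1]
      exact Ioo_subset_Icc_self hIoo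
  by_cases H : ∀ n, v (Q n) ∈ Icc (-M) M
  · -- never diverges: eventually periodic
    right
    have hGood' : ∀ n, Q n ∈ F ∧ y n ∈ Icc (Q n).1 (Q n).2 :=
      fun n => hGood n (fun k _ => H k)
    have hy1 : ∀ n, y (n + 1) = v (Q n) := by
      intro n
      have := (hv _ (hGood' n).1 _ (hGood' n).2).2
      simpa [hydef, newtonSeq] using this
    constructor
    · intro n
      refine ⟨(hF _ (hGood' n).1).2 (hGood' n).2, (hv _ (hGood' n).1 _ (hGood' n).2).1⟩
    · -- pigeonhole on F
      have : ∃ m n : ℕ, m ≠ n ∧ (⟨Q m, (hGood' m).1⟩ : {q // q ∈ F}) = ⟨Q n, (hGood' n).1⟩ :=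
        Finite.exists_ne_map_eq_of_infinite _
      obtain ⟨m, n, hmn, heq⟩ := this
      have hQeq : Q m = Q n := by simpa using congrArg Subtype.val heq
      have key : ∀ a b : ℕ, a < b → Q a = Q b →
          ∃ p₀ : ℕ, 1 ≤ p₀ ∧ ∃ N : ℕ, ∀ j ≥ N,
            newtonSeq f f' x (j + p₀) = newtonSeq f f' x j := by
        intro a b hab hab2
        refine ⟨b - a, by omega, a + 1, ?_⟩
        have hQper : ∀ j ≥ a, Q (j + (b - a)) = Q j := by
          intro j hj
          obtain ⟨i, rfl⟩ := Nat.exists_eq_add_of_le hj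
          have h1 : a + i + (b - a) = i + b := by omega
          have h2 : Q (i + b) = g^[i] (Q b) := by
            simp [hQdef, Function.iterate_add_apply]
          have h3 : Q (a + i) = g^[i] (Q a) := by
            simp [hQdef, Nat.add_comm a i, Function.iterate_add_apply]
          rw [h1, h2, ← hab2, ← h3]
        intro j hj
        obtain ⟨k, rfl⟩ : ∃ k, j = k + 1 := ⟨j - 1, by omega⟩
        have hk : k ≥ a := by omega
        have hy : y (k + 1 + (b - a)) = y (k + 1) := by
          have e : k + 1 + (b - a) = (k + (b - a)) + 1 := by omega
          rw [e, hy1, hy1, hQper k hk]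
        exact hy
      rcases lt_or_gt_of_ne hmn with hlt | hlt
      · exact key m n hlt hQeq
      · exact key n m hlt hQeq.symm
  · -- divergence at the least bad time
    left
    push_neg at H
    have hex : ∃ n, v (Q n) ∉ Icc (-M) M := H
    set n := Nat.find hex with hn
    have hbad : v (Q n) ∉ Icc (-M) M := Nat.find_spec hex
    have hmin : ∀ k < n, v (Q k) ∈ Icc (-M) M := by
      intro k hk
      by_contra hc
      have h2 : n ≤ k := Nat.find_le hc
      omega
    have hGoodk : ∀ k ≤ n, Q k ∈ F ∧ y k ∈ Icc (Q k).1 (Q k).2 := by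
      intro k hk
      exact hGood k (fun j hj => hmin j (lt_of_lt_of_le hj hk))
    refine ⟨n, ?_, ?_⟩
    · intro k hk
      obtain ⟨hkF, hky⟩ := hGoodk k hk
      exact ⟨(hF _ hkF).2 hky, (hv _ hkF _ hky).1⟩
    · have hy1 : y (n + 1) = v (Q n) := by
        have := (hv _ (hGoodk n le_rfl).1 _ (hGoodk n le_rfl).2).2
        simpa [hydef, newtonSeq] using this
      have : M < |v (Q n)| := by
        rw [mem_Icc, not_and_or, not_le, not_le] at hbad
        rcases hbad with h | h
        · rw [lt_abs]; right; linarith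
        · rw [lt_abs]; left; exact h
      rw [hy1]
      exact this
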